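/- If the working covariance equals the true covariance, Σ_i = Σ⁰_i for all i, then the sandwich variance Ψ^{-1} Φ Ψ^{-1} reduces to Ψ^{-1} with Ψ = Σ_i W_i^T (Σ⁰_i)^{-1} W_i, and for any other choice of positive definite working covariances Σ_i (with the resulting Ψ and Φ, Ψ invertible), one has Ψ^{-1} Φ Ψ^{-1} ≽ (Σ_i W_i^T (Σ⁰_i)^{-1} W_i)^{-1} in the Loewner order. -/
import Mathlib


open Matrix

/-- if the working covariance equals the true covariance,
the sandwich variance `Ψ⁻¹ΦΨ⁻¹` reduces to `Ψ₀⁻¹` with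
`Ψ₀ = ∑ W_iᵀ (Σ⁰_i)⁻¹ W_i`; and for any other positive definite working
covariances (with resulting `Ψ`, `Φ`, `Ψ` invertible),
`Ψ⁻¹ΦΨ⁻¹ ≽ Ψ₀⁻¹` in the Loewner order (asymptotic efficiency). -/
theorem stmt14 {ι : Type*} (Ω : Finset ι) (p : ℕ) (m : ι → ℕ)
    (W : ∀ i, Matrix (Fin (m i)) (Fin p) ℝ)
    (S S0 : ∀ i, Matrix (Fin (m i)) (Fin (m i)) ℝ)
    (hS : ∀ i, (S i).PosDef) (hS0 : ∀ i, (S0 i).PosDef)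
    (Ψ Φ Ψ₀ : Matrix (Fin p) (Fin p) ℝ)
    (hΨ : Ψ = ∑ i ∈ Ω, (W i)ᵀ * (S i)⁻¹ * W i)
    (hΦ : Φ = ∑ i ∈ Ω, (W i)ᵀ * (S i)⁻¹ * S0 i * (S i)⁻¹ * W i)
    (hΨ₀ : Ψ₀ = ∑ i ∈ Ω, (W i)ᵀ * (S0 i)⁻¹ * W i)
    (hΨ₀pd : Ψ₀.PosDef) (hΨinv : IsUnit Ψ.det) :
    ((∀ i, S i = S0 i) → Ψ⁻¹ * Φ * Ψ⁻¹ = Ψ₀⁻¹) ∧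
    (Ψ⁻¹ * Φ * Ψ⁻¹ - Ψ₀⁻¹).PosSemidef := by
  have hSdet : ∀ i, IsUnit (S i).det := fun i => (hS i).det_pos.ne'.isUnit
  have hS0det : ∀ i, IsUnit (S0 i).det := fun i => (hS0 i).det_pos.ne'.isUnit
  have hΨ₀inv : IsUnit Ψ₀.det := hΨ₀pd.det_pos.ne'.isUnit
  -- symmetry facts
  have hSsym : ∀ i, ((S i)⁻¹)ᵀ = (S i)⁻¹ := fun i => by
    have := ((hS i).posSemidef.isHermitian.inv)
    simpa [Matrix.IsHermitian, Matrix.conjTranspose_eq_transpose_of_trivial] using this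
  have hS0sym : ∀ i, ((S0 i)⁻¹)ᵀ = (S0 i)⁻¹ := fun i => by
    have := ((hS0 i).posSemidef.isHermitian.inv)
    simpa [Matrix.IsHermitian, Matrix.conjTranspose_eq_transpose_of_trivial] using this
  have hΨsym : Ψᵀ = Ψ := by
    rw [hΨ, Matrix.transpose_sum]
    refine Finset.sum_congr rfl fun i _ => ?_
    rw [Matrix.transpose_mul, Matrix.transpose_mul, Matrix.transpose_transpose, hSsym,
      Matrix.mul_assoc]
  have hΨ₀sym : Ψ₀ᵀ = Ψ₀ := by
    rw [hΨ₀, Matrix.transpose_sum]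
    refine Finset.sum_congr rfl fun i _ => ?_
    rw [Matrix.transpose_mul, Matrix.transpose_mul, Matrix.transpose_transpose, hS0sym,
      Matrix.mul_assoc]
  have hΨ₀invsym : (Ψ₀⁻¹)ᵀ = Ψ₀⁻¹ := by rw [Matrix.transpose_nonsing_inv, hΨ₀sym]
  have hΨinvsym : (Ψ⁻¹)ᵀ = Ψ⁻¹ := by rw [Matrix.transpose_nonsing_inv, hΨsym]
  -- part 1
  constructor
  · intro h
    have hΨeq : Ψ = Ψ₀ := by
      rw [hΨ, hΨ₀]; exact Finset.sum_congr rfl fun i _ => by rw [h]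
    have hΦeq : Φ = Ψ₀ := by
      rw [hΦ, hΨ₀]
      refine Finset.sum_congr rfl fun i _ => ?_
      simp only [h, Matrix.mul_assoc]
      rw [Matrix.mul_nonsing_inv_cancel_left _ _ (hS0det i)]
    rw [hΨeq, hΦeq, Matrix.nonsing_inv_mul _ hΨ₀inv, Matrix.one_mul]
  -- part 2
  · set C : Matrix (Fin p) (Fin p) ℝ := Ψ₀⁻¹ * Ψ with hC
    have hCT : Cᵀ = Ψ * Ψ₀⁻¹ := by rw [hC, Matrix.transpose_mul, hΨsym, hΨ₀invsym]
    set D : ∀ i, Matrix (Fin (m i)) (Fin p) ℝ :=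
      fun i => (S i)⁻¹ * W i - (S0 i)⁻¹ * W i * C with hD
    have hterm : ∀ i ∈ Ω, (D i)ᵀ * S0 i * D i =
        (W i)ᵀ * (S i)⁻¹ * S0 i * (S i)⁻¹ * W i
        - ((W i)ᵀ * (S i)⁻¹ * W i) * C
        - Cᵀ * ((W i)ᵀ * (S i)⁻¹ * W i)
        + Cᵀ * ((W i)ᵀ * (S0 i)⁻¹ * W i) * C := by
      intro i _
      have hDT : (D i)ᵀ = (W i)ᵀ * (S i)⁻¹ - Cᵀ * ((W i)ᵀ * (S0 i)⁻¹) := by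
        rw [hD]
        simp only [Matrix.transpose_sub, Matrix.transpose_mul, hSsym, hS0sym, Matrix.mul_assoc]
      rw [hDT, hD]
      simp only [Matrix.sub_mul, Matrix.mul_sub, Matrix.mul_assoc]
      rw [Matrix.nonsing_inv_mul_cancel_left _ _ (hS0det i),
        Matrix.nonsing_inv_mul_cancel_left _ _ (hS0det i)]
      rw [show S0 i * ((S0 i)⁻¹ * (W i * C)) = W i * C from
        Matrix.mul_nonsing_inv_cancel_left _ _ (hS0det i)]
      abel
    -- sum the per-term identity
    have hkey : ∑ i ∈ Ω, (D i)ᵀ * S0 i * D i = Φ - Ψ * Ψ₀⁻¹ * Ψ := by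
      rw [Finset.sum_congr rfl hterm]
      simp only [Finset.sum_add_distrib, Finset.sum_sub_distrib, ← Finset.sum_mul,
        ← Finset.mul_sum, ← hΦ, ← hΨ, ← hΨ₀]
      have hC2 : Cᵀ * Ψ₀ * C = Ψ * Ψ₀⁻¹ * Ψ := by
        rw [hCT, hC, Matrix.mul_assoc (Ψ * Ψ₀⁻¹), ← Matrix.mul_assoc Ψ₀,
          Matrix.mul_nonsing_inv _ hΨ₀inv, Matrix.one_mul]
      have hC3 : Ψ * C = Ψ * Ψ₀⁻¹ * Ψ := by rw [hC, Matrix.mul_assoc]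
      have hC4 : Cᵀ * Ψ = Ψ * Ψ₀⁻¹ * Ψ := by rw [hCT]
      rw [hC2, hC3, hC4]
      abel
    -- each term is PSD, so the sum is PSD
    have hsumpsd : (∑ i ∈ Ω, (D i)ᵀ * S0 i * D i).PosSemidef := by
      refine Finset.sum_induction _ Matrix.PosSemidef
        (fun A B hA hB => hA.add hB) Matrix.PosSemidef.zero fun i _ => ?_
      have := (hS0 i).posSemidef.conjTranspose_mul_mul_same (D i)
      simpa [Matrix.conjTranspose_eq_transpose_of_trivial] using this
    rw [hkey] at hsumpsd
    -- conjugate by Ψ⁻¹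
    have hconj := hsumpsd.conjTranspose_mul_mul_same (Ψ⁻¹)
    have hfinal : (Ψ⁻¹)ᴴ * (Φ - Ψ * Ψ₀⁻¹ * Ψ) * Ψ⁻¹ = Ψ⁻¹ * Φ * Ψ⁻¹ - Ψ₀⁻¹ := by
      have h6 : Ψ⁻¹ * (Ψ * Ψ₀⁻¹ * Ψ) * Ψ⁻¹ = Ψ₀⁻¹ := by
        rw [Matrix.mul_assoc Ψ Ψ₀⁻¹ Ψ, Matrix.nonsing_inv_mul_cancel_left _ _ hΨinv,
          Matrix.mul_nonsing_inv_cancel_right _ _ hΨinv]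
      rw [Matrix.conjTranspose_eq_transpose_of_trivial, hΨinvsym, Matrix.mul_sub,
        Matrix.sub_mul, h6]
    rwa [hfinal] at hconj
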